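/- Let M₂, M₄, M₆ be the explicit 14×14 integer matrices of structure constants for the left cell A₁ of W(H₄) given in the paper, and define M₁₄ = 2I − M₂ + M₄ − 6M₆ − 2M₂² + 4M₂M₄ + M₂M₆ − 2M₄² − 6M₄M₆ + M₆M₂ − 2M₆² − 5M₂²M₄ + 3M₂M₄² + M₂M₆². Then M₁₄² = I and the characteristic polynomial of M₁₄ is (u−1)⁷(u+1)⁷. -/

import Mathlib

/-!
Evaluating the polynomial in `M₂, M₄, M₆` gives the permutation matrix of the order-reversing
involution `i ↦ 13 - i` of the basis. It splits the basis into seven transposed pairs and acts on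
each pair as the swap `!![0, 1; 1, 0]`, which squares to `1` and has characteristic polynomial
`X ^ 2 - 1 = (X - 1) * (X + 1)`.
-/

open Polynomial Matrix

def M2 : Matrix (Fin 14) (Fin 14) ℤ :=
  !![0, 1, 0, 0, 0, 0, 0, 0, 0, 0, 0, 0, 0, 0;
  1, 0, 1, 0, 0, 0, 0, 0, 0, 0, 0, 0, 0, 0;
  0, 1, 1, 1, 0, 0, 0, 0, 0, 0, 0, 0, 0, 0;
  0, 0, 1, 1, 1, 1, 0, 0, 0, 0, 0, 0, 0, 0;
  0, 0, 0, 1, 0, 0, 1, 0, 0, 0, 0, 0, 0, 0;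
  0, 0, 0, 1, 0, 1, 0, 1, 1, 0, 0, 0, 0, 0;
  0, 0, 0, 0, 1, 0, 0, 0, 1, 0, 0, 0, 0, 0;
  0, 0, 0, 0, 0, 1, 0, 0, 0, 1, 0, 0, 0, 0;
  0, 0, 0, 0, 0, 1, 1, 0, 1, 0, 1, 0, 0, 0;
  0, 0, 0, 0, 0, 0, 0, 1, 0, 0, 1, 0, 0, 0;
  0, 0, 0, 0, 0, 0, 0, 0, 1, 1, 1, 1, 0, 0;
  0, 0, 0, 0, 0, 0, 0, 0, 0, 0, 1, 1, 1, 0;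
  0, 0, 0, 0, 0, 0, 0, 0, 0, 0, 0, 1, 0, 1;
  0, 0, 0, 0, 0, 0, 0, 0, 0, 0, 0, 0, 1, 0]
def M4 : Matrix (Fin 14) (Fin 14) ℤ :=
  !![0, 0, 0, 1, 0, 0, 0, 0, 0, 0, 0, 0, 0, 0;
  0, 0, 1, 1, 1, 1, 0, 0, 0, 0, 0, 0, 0, 0;
  0, 1, 2, 3, 1, 2, 1, 1, 1, 0, 0, 0, 0, 0;
  1, 1, 3, 4, 2, 4, 1, 1, 3, 1, 1, 0, 0, 0;
  0, 1, 1, 2, 0, 2, 1, 1, 1, 0, 1, 0, 0, 0;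
  0, 1, 2, 4, 2, 4, 2, 2, 4, 1, 3, 1, 0, 0;
  0, 0, 1, 1, 1, 2, 0, 1, 2, 1, 1, 1, 0, 0;
  0, 0, 1, 1, 1, 2, 1, 0, 2, 1, 1, 1, 0, 0;
  0, 0, 1, 3, 1, 4, 2, 2, 4, 2, 4, 2, 1, 0;
  0, 0, 0, 1, 0, 1, 1, 1, 2, 0, 2, 1, 1, 0;
  0, 0, 0, 1, 1, 3, 1, 1, 4, 2, 4, 3, 1, 1;
  0, 0, 0, 0, 0, 1, 1, 1, 2, 1, 3, 2, 1, 0;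
  0, 0, 0, 0, 0, 0, 0, 0, 1, 1, 1, 1, 0, 0;
  0, 0, 0, 0, 0, 0, 0, 0, 0, 0, 1, 0, 0, 0]
def M6 : Matrix (Fin 14) (Fin 14) ℤ :=
  !![0, 0, 0, 0, 0, 1, 0, 0, 0, 0, 0, 0, 0, 0;
  0, 0, 0, 1, 0, 1, 1, 0, 1, 0, 0, 0, 0, 0;
  0, 0, 1, 2, 1, 3, 1, 1, 2, 1, 1, 0, 0, 0;
  0, 1, 2, 4, 2, 4, 2, 2, 4, 1, 3, 1, 0, 0;
  0, 0, 1, 2, 1, 2, 0, 1, 2, 1, 1, 1, 0, 0;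
  1, 1, 3, 4, 2, 5, 2, 2, 5, 2, 4, 2, 1, 0;
  0, 1, 1, 2, 0, 2, 1, 1, 2, 1, 2, 1, 0, 0;
  0, 0, 1, 2, 1, 2, 1, 1, 2, 0, 2, 1, 1, 0;
  0, 1, 2, 4, 2, 5, 2, 2, 5, 2, 4, 3, 1, 1;
  0, 0, 1, 1, 1, 2, 1, 0, 2, 1, 2, 1, 0, 0;
  0, 0, 1, 3, 1, 4, 2, 2, 4, 2, 4, 2, 1, 0;
  0, 0, 0, 1, 1, 2, 1, 1, 3, 1, 2, 1, 0, 0;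
  0, 0, 0, 0, 0, 1, 0, 1, 1, 0, 1, 0, 0, 0;
  0, 0, 0, 0, 0, 0, 0, 0, 1, 0, 0, 0, 0, 0]

def M14 : Matrix (Fin 14) (Fin 14) ℤ :=
  2 - M2 + M4 - 6 * M6 - 2 * M2 ^ 2 + 4 * M2 * M4 + M2 * M6 - 2 * M4 ^ 2 -
    6 * M4 * M6 + M6 * M2 - 2 * M6 ^ 2 - 5 * M2 ^ 2 * M4 + 3 * M2 * M4 ^ 2 +
    M2 * M6 ^ 2

namespace Matrix

variable {m R : Type*} [Fintype m] [DecidableEq m] [CommRing R]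

/-- Unless `2` is invertible the swap need not be diagonalizable, but conjugating it by the
unimodular `fromBlocks 1 0 1 1` makes it block upper triangular with diagonal blocks `1`, `-1`. -/
theorem charpoly_fromBlocks_zero_one_one_zero :
    (fromBlocks 0 1 1 0 : Matrix (m ⊕ m) (m ⊕ m) R).charpoly =
      (X - 1) ^ Fintype.card m * (X + 1) ^ Fintype.card m := by
  set U : Matrix (m ⊕ m) (m ⊕ m) R := fromBlocks 1 0 1 1
  set V : Matrix (m ⊕ m) (m ⊕ m) R := fromBlocks 1 0 (-1) 1
  have hVU : V * U = 1 := by simp [U, V, fromBlocks_multiply]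
  have hconj : fromBlocks 0 1 1 0 = U * (fromBlocks 1 1 0 (-1) * V) := by
    simp [U, V, fromBlocks_multiply]
  rw [hconj, charpoly_mul_comm, mul_assoc, hVU, mul_one, charpoly_fromBlocks_zero₂₁,
    charpoly_one, ← diagonal_one, diagonal_neg, charpoly_diagonal]
  simp [sub_eq_add_neg]

end Matrix

/-- Sends `Sum.inl i` and `Sum.inr i` to mirror-image positions of `Fin (m + m)`. -/
def finSumFinEquivRev (m : ℕ) : Fin m ⊕ Fin m ≃ Fin (m + m) :=
  (Equiv.sumCongr (Equiv.refl _) Fin.revPerm).trans finSumFinEquiv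

theorem submatrix_permMatrix_revPerm {R : Type*} [Zero R] [One R] (m : ℕ) :
    ((Fin.revPerm : Equiv.Perm (Fin (m + m))).permMatrix R).submatrix
        (finSumFinEquivRev m) (finSumFinEquivRev m) = Matrix.fromBlocks 0 1 1 0 := by
  ext (i | i) (j | j) <;>
    simp [finSumFinEquivRev, PEquiv.toMatrix_apply, Matrix.one_apply, Fin.ext_iff] <;> grind

theorem charpoly_permMatrix_revPerm {R : Type*} [CommRing R] (m : ℕ) :
    ((Fin.revPerm : Equiv.Perm (Fin (m + m))).permMatrix R).charpoly =
      (X - 1) ^ m * (X + 1) ^ m := by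
  rw [← Matrix.charpoly_reindex (finSumFinEquivRev m).symm, Matrix.reindex_apply,
    Equiv.symm_symm, submatrix_permMatrix_revPerm, Matrix.charpoly_fromBlocks_zero_one_one_zero,
    Fintype.card_fin]

theorem Equiv.Perm.permMatrix_sq_of_involutive {n R : Type*} [Fintype n] [DecidableEq n]
    [Semiring R] {σ : Equiv.Perm n} (hσ : Function.Involutive σ) : σ.permMatrix R ^ 2 = 1 := by
  rw [sq, ← Matrix.permMatrix_mul, show σ * σ = 1 from Equiv.ext hσ, Matrix.permMatrix_one]

theorem M14_eq_permMatrix_revPerm : M14 = (Fin.revPerm : Equiv.Perm (Fin 14)).permMatrix ℤ := by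
  decide +kernel

/-- M₁₄ squares to the identity and has characteristic polynomial (u−1)⁷(u+1)⁷. -/
theorem stmt6 :
    M14 ^ 2 = 1 ∧ M14.charpoly = (X - 1) ^ 7 * (X + 1) ^ 7 := by
  rw [M14_eq_permMatrix_revPerm]
  exact ⟨Equiv.Perm.permMatrix_sq_of_involutive Fin.rev_involutive,
    charpoly_permMatrix_revPerm 7⟩
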